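/- Let m ≥ 1 and n ≥ 2 be integers. Then Σ_{k=1}^{n−1} H_k/((k+m)(k+m+1)) = H_m/m − (H_{n+m} − H_n)/m − H_n/(n+m), and Σ_{k=1}^{n−1} H̄_k/((k+m)(k+m+1)) = nH̄_n/((n+m)m) − H_m/m² + (H_{n+m} − H_n)/m². Moreover, Σ_{k=1}^{n−1} H_k/(k(k+1)) = H̄_n − H_n/n. Consequently, Σ_{k=1}^∞ H_k/((k+m)(k+m+1)) = H_m/m and Σ_{k=1}^∞ H̄_k/((k+m)(k+m+1)) = π²/(6m) − H_m/m². -/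

import Mathlib

open Finset

/-- `n`-th harmonic number. -/
noncomputable def H (n : ℕ) : ℝ := ∑ k ∈ Finset.Icc 1 n, (1 : ℝ) / k

/-- Second-order harmonic number. -/
noncomputable def Hbar (n : ℕ) : ℝ := ∑ k ∈ Finset.Icc 1 n, (1 : ℝ) / (k : ℝ) ^ 2

open Filter Topology

/-!
Each finite sum telescopes: its closed form changes from `n` to `n + 1` by exactly the `k = n`
summand, and the `k = 0` summand vanishes because `H 0 = 0`. For the series, let `n → ∞` in the
closed forms: `H (n + m) - H n` is a sum of `m` terms each tending to `0`, `H n / n → 0` by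
Cesàro, and `Hbar n → ζ(2) = π ^ 2 / 6`.
-/

lemma H_zero : H 0 = 0 := by simp [H]

lemma Hbar_zero : Hbar 0 = 0 := by simp [Hbar]

lemma H_succ (n : ℕ) : H (n + 1) = H n + 1 / ((n : ℝ) + 1) := by
  rw [H, H, sum_Icc_succ_top (by omega)]
  push_cast
  rfl

lemma Hbar_succ (n : ℕ) : Hbar (n + 1) = Hbar n + 1 / ((n : ℝ) + 1) ^ 2 := by
  rw [Hbar, Hbar, sum_Icc_succ_top (by omega)]
  push_cast
  rfl

lemma H_nonneg (n : ℕ) : 0 ≤ H n := sum_nonneg fun _ _ => by positivity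

lemma Hbar_nonneg (n : ℕ) : 0 ≤ Hbar n := sum_nonneg fun _ _ => by positivity

lemma H_eq_sum_range (n : ℕ) : H n = ∑ k ∈ range n, 1 / ((k : ℝ) + 1) := by
  induction n with
  | zero => simp [H_zero]
  | succ n ih => rw [H_succ, ih, sum_range_succ]

lemma Hbar_eq_sum_range (n : ℕ) : Hbar n = ∑ k ∈ range n, 1 / ((k : ℝ) + 1) ^ 2 := by
  induction n with
  | zero => simp [Hbar_zero]
  | succ n ih => rw [Hbar_succ, ih, sum_range_succ]

lemma sum_Icc_one_sub_one_eq_sum_range {M : Type*} [AddCommMonoid M] {f : ℕ → M} (hf : f 0 = 0)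
    (n : ℕ) : ∑ k ∈ Icc 1 (n - 1), f k = ∑ k ∈ range n, f k := by
  cases n with
  | zero => simp
  | succ n =>
    rw [sum_range_eq_add_Ico f (by omega), hf, zero_add, Nat.add_sub_cancel,
      ← Ico_add_one_right_eq_Icc]

lemma hasSum_nat_succ_iff_of_eq_zero {G : Type*} [AddCommGroup G] [TopologicalSpace G]
    [IsTopologicalAddGroup G] {f : ℕ → G} {a : G} (hf : f 0 = 0) :
    HasSum (fun k => f (k + 1)) a ↔ HasSum f a := by
  simp [hasSum_nat_add_iff 1, hf]

theorem sum_range_H_div_shifted {m : ℕ} (hm : 0 < m) (n : ℕ) :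
    ∑ k ∈ range n, H k / (((k : ℝ) + m) * ((k : ℝ) + m + 1)) =
      H m / m - (H (n + m) - H n) / m - H n / ((n : ℝ) + m) := by
  induction n with
  | zero => simp [H_zero]
  | succ n ih =>
    have hm' : (0 : ℝ) < m := by exact_mod_cast hm
    have hnm : (n : ℝ) + m ≠ 0 := by positivity
    rw [sum_range_succ, ih, show n + 1 + m = n + m + 1 by ring, H_succ (n + m), H_succ n]
    push_cast
    field_simp
    ring

theorem sum_range_Hbar_div_shifted {m : ℕ} (hm : 0 < m) (n : ℕ) :
    ∑ k ∈ range n, Hbar k / (((k : ℝ) + m) * ((k : ℝ) + m + 1)) =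
      n * Hbar n / ((n + m) * m) - H m / (m : ℝ) ^ 2 + (H (n + m) - H n) / (m : ℝ) ^ 2 := by
  induction n with
  | zero => simp [Hbar_zero, H_zero]
  | succ n ih =>
    have hm' : (0 : ℝ) < m := by exact_mod_cast hm
    have hnm : (n : ℝ) + m ≠ 0 := by positivity
    rw [sum_range_succ, ih, show n + 1 + m = n + m + 1 by ring, H_succ (n + m), H_succ n,
      Hbar_succ n]
    push_cast
    field_simp
    ring

theorem sum_range_H_div_mul_succ (n : ℕ) :
    ∑ k ∈ range n, H k / ((k : ℝ) * ((k : ℝ) + 1)) = Hbar n - H n / n := by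
  induction n with
  | zero => simp [Hbar_zero, H_zero]
  | succ n ih =>
    rw [sum_range_succ, ih, H_succ, Hbar_succ]
    rcases n.eq_zero_or_pos with rfl | hn
    · simp [H_zero, Hbar_zero]
    · have hn' : (0 : ℝ) < n := by exact_mod_cast hn
      push_cast
      field_simp
      ring

lemma tendsto_H_add_sub_H (m : ℕ) : Tendsto (fun n => H (n + m) - H n) atTop (𝓝 0) := by
  simp_rw [H_eq_sum_range, sum_range_add, add_sub_cancel_left]
  simpa using tendsto_finsetSum (range m) fun i _ =>
    (tendsto_one_div_add_atTop_nhds_zero_nat (𝕜 := ℝ)).comp (tendsto_add_atTop_nat i)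

lemma tendsto_H_div_self : Tendsto (fun n => H n / n) atTop (𝓝 0) := by
  simpa [H_eq_sum_range, div_eq_inv_mul] using tendsto_one_div_add_atTop_nhds_zero_nat.cesaro

lemma tendsto_H_div_add (m : ℕ) : Tendsto (fun n => H n / ((n : ℝ) + m)) atTop (𝓝 0) := by
  have h := (tendsto_natCast_div_add_atTop (m : ℝ)).mul tendsto_H_div_self
  rw [mul_zero] at h
  refine h.congr' ((eventually_ne_atTop 0).mono fun n hn => ?_)
  have hn' : (0 : ℝ) < n := by exact_mod_cast Nat.pos_of_ne_zero hn
  field_simp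

lemma tendsto_Hbar : Tendsto Hbar atTop (𝓝 (Real.pi ^ 2 / 6)) := by
  have h : HasSum (fun k : ℕ => 1 / ((k : ℝ) + 1) ^ 2) (Real.pi ^ 2 / 6) := by
    simpa using (hasSum_nat_succ_iff_of_eq_zero (by simp)).mpr hasSum_zeta_two
  exact h.tendsto_sum_nat.congr fun n => (Hbar_eq_sum_range n).symm

theorem hasSum_H_div_shifted {m : ℕ} (hm : 0 < m) :
    HasSum (fun k : ℕ => H k / (((k : ℝ) + m) * ((k : ℝ) + m + 1))) (H m / m) := by
  rw [hasSum_iff_tendsto_nat_of_nonneg (fun k => div_nonneg (H_nonneg k) (by positivity))]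
  simp_rw [sum_range_H_div_shifted hm]
  simpa using (tendsto_const_nhds.sub ((tendsto_H_add_sub_H m).div_const (m : ℝ))).sub
    (tendsto_H_div_add m)

theorem hasSum_Hbar_div_shifted {m : ℕ} (hm : 0 < m) :
    HasSum (fun k : ℕ => Hbar k / (((k : ℝ) + m) * ((k : ℝ) + m + 1)))
      (Real.pi ^ 2 / (6 * m) - H m / (m : ℝ) ^ 2) := by
  rw [hasSum_iff_tendsto_nat_of_nonneg (fun k => div_nonneg (Hbar_nonneg k) (by positivity))]
  simp_rw [sum_range_Hbar_div_shifted hm]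
  have h := ((((tendsto_natCast_div_add_atTop (m : ℝ)).mul tendsto_Hbar).div_const m).sub
    (tendsto_const_nhds (x := H m / (m : ℝ) ^ 2))).add
    ((tendsto_H_add_sub_H m).div_const ((m : ℝ) ^ 2))
  convert h using 2 with n
  · rw [div_mul_eq_mul_div, div_div]
  · ring

theorem harmonic_partial_fraction_sums_general (m n : ℕ) (hm : 1 ≤ m) :
    (∑ k ∈ Finset.Icc 1 (n - 1), H k / (((k : ℝ) + m) * ((k : ℝ) + m + 1)) =
        H m / m - (H (n + m) - H n) / m - H n / ((n : ℝ) + m)) ∧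
    (∑ k ∈ Finset.Icc 1 (n - 1), Hbar k / (((k : ℝ) + m) * ((k : ℝ) + m + 1)) =
        (n : ℝ) * Hbar n / (((n : ℝ) + m) * m) - H m / (m : ℝ) ^ 2 +
          (H (n + m) - H n) / (m : ℝ) ^ 2) ∧
    (∑ k ∈ Finset.Icc 1 (n - 1), H k / ((k : ℝ) * ((k : ℝ) + 1)) = Hbar n - H n / n) ∧
    HasSum (fun k : ℕ => H (k + 1) / (((k : ℝ) + 1 + m) * ((k : ℝ) + 1 + m + 1)))
      (H m / m) ∧
    HasSum (fun k : ℕ => Hbar (k + 1) / (((k : ℝ) + 1 + m) * ((k : ℝ) + 1 + m + 1)))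
      (Real.pi ^ 2 / (6 * m) - H m / (m : ℝ) ^ 2) := by
  refine ⟨?_, ?_, ?_, ?_, ?_⟩
  · rw [sum_Icc_one_sub_one_eq_sum_range (by simp [H_zero]), sum_range_H_div_shifted hm]
  · rw [sum_Icc_one_sub_one_eq_sum_range (by simp [Hbar_zero]), sum_range_Hbar_div_shifted hm]
  · rw [sum_Icc_one_sub_one_eq_sum_range (by simp [H_zero]), sum_range_H_div_mul_succ]
  · simpa using (hasSum_nat_succ_iff_of_eq_zero (by simp [H_zero])).mpr (hasSum_H_div_shifted hm)
  · simpa using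
      (hasSum_nat_succ_iff_of_eq_zero (by simp [Hbar_zero])).mpr (hasSum_Hbar_div_shifted hm)

theorem harmonic_partial_fraction_sums (m n : ℕ) (hm : 1 ≤ m) (hn : 2 ≤ n) :
    (∑ k ∈ Finset.Icc 1 (n - 1), H k / (((k : ℝ) + m) * ((k : ℝ) + m + 1)) =
        H m / m - (H (n + m) - H n) / m - H n / ((n : ℝ) + m)) ∧
    (∑ k ∈ Finset.Icc 1 (n - 1), Hbar k / (((k : ℝ) + m) * ((k : ℝ) + m + 1)) =
        (n : ℝ) * Hbar n / (((n : ℝ) + m) * m) - H m / (m : ℝ) ^ 2 +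
          (H (n + m) - H n) / (m : ℝ) ^ 2) ∧
    (∑ k ∈ Finset.Icc 1 (n - 1), H k / ((k : ℝ) * ((k : ℝ) + 1)) = Hbar n - H n / n) ∧
    HasSum (fun k : ℕ => H (k + 1) / (((k : ℝ) + 1 + m) * ((k : ℝ) + 1 + m + 1)))
      (H m / m) ∧
    HasSum (fun k : ℕ => Hbar (k + 1) / (((k : ℝ) + 1 + m) * ((k : ℝ) + 1 + m + 1)))
      (Real.pi ^ 2 / (6 * m) - H m / (m : ℝ) ^ 2) :=
  harmonic_partial_fraction_sums_general m n hm
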